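/- arXiv:1809.07913 — 2 statements merged into one kernel-verified Lean document; each statement's English description precedes it below -/
import Mathlib

section
/- For every word σ ∈ {1,2,3}^k (k ≥ 0) and every x₀ ∈ ℝ, one has ∫_{J_σ} (x − x₀)² dP(x) = 3^{−k} ( 25^{−k} · (1/9) + (S_σ(1/2) − x₀)² ). -/
/-!
Self-similarity gives `∫ f dP = 3⁻¹ ∑ⱼ ∫ f ∘ S j dP`. Since the mass of `P` outside
`[-t, 1 + t]` is at most its mass outside `[-5t, 1 + 5t]`, `P` lives on `[0,1]`, where the pieces
`S j [0,1]` are disjoint; so on `J_σ = S (σ 0) '' J_{tail σ}` only the branch `σ 0` contributes, and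
`(S j x - x₀)² = (x - (5x₀ - 2j))² / 25` shows that each letter multiplies the integral by `1/75`
while pulling `x₀` back by `S j`. The empty word is the second moment about `x₀`, computed from the
mean `1/2` and variance `1/9`, which in turn solve the self-similarity equations for `x` and `x²`.
-/

open MeasureTheory Filter
open scoped ENNReal

noncomputable section

/-- The three contractive similarities `S j x = x/5 + 2 j/5` (indexing `j = 0,1,2`
corresponds to the paper's `j = 1,2,3`). -/
def S (j : Fin 3) : ℝ → ℝ := fun x => x / 5 + 2 * (j : ℝ) / 5

/-- For a word `σ ∈ {1,2,3}^k`, the composition `S_σ = S_{σ 0} ∘ ⋯ ∘ S_{σ (k-1)}`. -/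
def Sword {k : ℕ} (σ : Fin k → Fin 3) : ℝ → ℝ :=
  (List.ofFn fun i => S (σ i)).foldr (· ∘ ·) id

/-- The basic interval `J j = S j ([0,1])`. -/
def J (j : Fin 3) : Set ℝ := S j '' Set.Icc 0 1

/-- The interval `J_σ = S_σ([0,1])`. -/
def Jword {k : ℕ} (σ : Fin k → Fin 3) : Set ℝ := Sword σ '' Set.Icc 0 1

/-- The distortion error `V(P; α) = ∫ min_{a ∈ α} (x - a)^2 dP(x)`. -/
def distortion (P : Measure ℝ) (α : Set ℝ) : ℝ :=
  ∫ x, (⨅ a : α, (x - (a : ℝ)) ^ 2) ∂P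

/-- The `n`-th quantization error
`V_n = inf { V(P; α) : α ⊂ ℝ finite, 1 ≤ card α ≤ n }`. -/
def quantErr (P : Measure ℝ) (n : ℕ) : ℝ :=
  sInf {e | ∃ α : Set ℝ, α.Finite ∧ α.Nonempty ∧ α.ncard ≤ n ∧ distortion P α = e}

/-- The self-similarity equation `P = (1/3)(P∘S₁⁻¹ + P∘S₂⁻¹ + P∘S₃⁻¹)`
characterizing the standard triadic Cantor distribution. -/
def IsTriadicCantor (P : Measure ℝ) : Prop :=
  P = (3 : ℝ≥0∞)⁻¹ • (P.map (S 0) + P.map (S 1) + P.map (S 2))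

lemma S_eq_affine (j : Fin 3) : S j = fun x => 5⁻¹ * x + 2 * (j : ℝ) / 5 := by
  funext x; simp only [S]; ring

lemma S_sub (j : Fin 3) (x x₀ : ℝ) : S j x - x₀ = (x - (5 * x₀ - 2 * (j : ℝ))) / 5 := by
  simp only [S]; ring

lemma continuous_S (j : Fin 3) : Continuous (S j) := by
  unfold S; fun_prop

lemma S_injective (j : Fin 3) : Function.Injective (S j) := fun x y h => by
  simp only [S] at h; linarith

lemma measurableEmbedding_S (j : Fin 3) : MeasurableEmbedding (S j) :=
  (continuous_S j).measurableEmbedding (S_injective j)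

lemma S_mapsTo_Icc (j : Fin 3) (t : ℝ) :
    Set.MapsTo (S j) (Set.Icc (-(5 * t)) (1 + 5 * t)) (Set.Icc (-t) (1 + t)) := by
  rintro x ⟨hx₀, hx₁⟩
  have hj : (j : ℝ) ≤ 2 := by exact_mod_cast j.is_le
  have hj₀ : (0 : ℝ) ≤ j := by positivity
  constructor <;> simp only [S] <;> linarith

lemma S_mapsTo_unitInterval (j : Fin 3) : Set.MapsTo (S j) (Set.Icc 0 1) (Set.Icc 0 1) := by
  simpa using S_mapsTo_Icc j 0

-- The pieces `S j [0,1] = [2j/5, (2j+1)/5]` are pairwise separated by gaps of length `1/5`.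
lemma eq_of_S_eq {i j : Fin 3} {x y : ℝ} (hx : x ∈ Set.Icc (0 : ℝ) 1) (hy : y ∈ Set.Icc (0 : ℝ) 1)
    (h : S i x = S j y) : i = j := by
  obtain ⟨hx₀, hx₁⟩ := hx
  obtain ⟨hy₀, hy₁⟩ := hy
  fin_cases i <;> fin_cases j <;> simp [S] at h ⊢ <;> linarith

lemma Sword_succ {k : ℕ} (σ : Fin (k + 1) → Fin 3) :
    Sword σ = S (σ 0) ∘ Sword (Fin.tail σ) := by
  rw [Sword, List.ofFn_succ]; rfl

lemma Jword_succ {k : ℕ} (σ : Fin (k + 1) → Fin 3) :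
    Jword σ = S (σ 0) '' Jword (Fin.tail σ) := by
  rw [Jword, Jword, Sword_succ, Set.image_comp]

lemma continuous_Sword {k : ℕ} (σ : Fin k → Fin 3) : Continuous (Sword σ) := by
  induction k with
  | zero => exact continuous_id
  | succ k ih => rw [Sword_succ]; exact (continuous_S _).comp (ih _)

lemma Sword_mapsTo_unitInterval {k : ℕ} (σ : Fin k → Fin 3) :
    Set.MapsTo (Sword σ) (Set.Icc 0 1) (Set.Icc 0 1) := by
  induction k with
  | zero => exact Set.mapsTo_id _
  | succ k ih => rw [Sword_succ]; exact (S_mapsTo_unitInterval _).comp (ih _)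

lemma Jword_subset_unitInterval {k : ℕ} (σ : Fin k → Fin 3) : Jword σ ⊆ Set.Icc 0 1 :=
  (Sword_mapsTo_unitInterval σ).image_subset

lemma measurableSet_Jword {k : ℕ} (σ : Fin k → Fin 3) : MeasurableSet (Jword σ) :=
  (isCompact_Icc.image (continuous_Sword σ)).measurableSet

namespace IsTriadicCantor

variable {P : Measure ℝ}

lemma eq_smul_sum (hP : IsTriadicCantor P) : P = (3 : ℝ≥0∞)⁻¹ • ∑ j, P.map (S j) := by
  rw [Fin.sum_univ_three]; exact hP

lemma measure_le_of_preimage_subset (hP : IsTriadicCantor P) {A B : Set ℝ}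
    (hA : MeasurableSet A) (hAB : ∀ j, S j ⁻¹' A ⊆ B) : P A ≤ P B := by
  calc P A = 3⁻¹ * ∑ j, P (S j ⁻¹' A) := by
        conv_lhs => rw [hP.eq_smul_sum]
        simp [Measure.map_apply (measurableEmbedding_S _).measurable hA]
    _ ≤ 3⁻¹ * ∑ _j : Fin 3, P B := by gcongr with j; exact hAB j
    _ = P B := by simp [← mul_assoc, ENNReal.inv_mul_cancel]

lemma measure_compl_Icc_eq_zero (hP : IsTriadicCantor P) [IsFiniteMeasure P] {t : ℝ}
    (ht : 0 < t) : P (Set.Icc (-t) (1 + t))ᶜ = 0 := by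
  set A : ℕ → Set ℝ := fun n => (Set.Icc (-(5 ^ n * t)) (1 + 5 ^ n * t))ᶜ
  have hle : ∀ n, P (Set.Icc (-t) (1 + t))ᶜ ≤ P (A n) := by
    intro n
    induction n with
    | zero => simp [A]
    | succ n ih =>
      refine ih.trans (hP.measure_le_of_preimage_subset measurableSet_Icc.compl fun j => ?_)
      rw [Set.preimage_compl, Set.compl_subset_compl, pow_succ', mul_assoc]
      exact S_mapsTo_Icc j _
  have hA : Antitone A := fun m n hmn => by
    have : 5 ^ m * t ≤ 5 ^ n * t := by gcongr; norm_num
    exact Set.compl_subset_compl.2 (Set.Icc_subset_Icc (by linarith) (by linarith))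
  have hA_empty : ⋂ n, A n = ∅ := by
    refine Set.eq_empty_of_forall_notMem fun x hx => ?_
    obtain ⟨n, hn⟩ := pow_unbounded_of_one_lt (|x| / t) (by norm_num : (1 : ℝ) < 5)
    rw [div_lt_iff₀ ht] at hn
    exact Set.mem_iInter.1 hx n ⟨by linarith [neg_abs_le x], by linarith [le_abs_self x]⟩
  have htendsto := tendsto_measure_iInter_atTop (μ := P)
    (fun n => measurableSet_Icc.compl.nullMeasurableSet) hA ⟨0, measure_ne_top P _⟩
  rw [hA_empty, measure_empty] at htendsto
  exact le_antisymm (ge_of_tendsto' htendsto hle) bot_le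

lemma ae_mem_unitInterval (hP : IsTriadicCantor P) [IsFiniteMeasure P] :
    ∀ᵐ x ∂P, x ∈ Set.Icc (0 : ℝ) 1 := by
  have h : ∀ᵐ x ∂P, ∀ n : ℕ, x ∈ Set.Icc (-(1 / (n + 1 : ℝ))) (1 + 1 / (n + 1)) :=
    ae_all_iff.2 fun n => measure_compl_Icc_eq_zero hP Nat.one_div_pos_of_nat
  filter_upwards [h] with x hx
  constructor
  · by_contra! hneg
    obtain ⟨n, hn⟩ := exists_nat_one_div_lt (neg_pos.2 hneg)
    linarith [(hx n).1]
  · by_contra! hgt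
    obtain ⟨n, hn⟩ := exists_nat_one_div_lt (sub_pos.2 hgt)
    linarith [(hx n).2]

lemma integrable_of_continuous (hP : IsTriadicCantor P) [IsFiniteMeasure P] {f : ℝ → ℝ}
    (hf : Continuous f) : Integrable f P := by
  rw [← Measure.restrict_eq_self_of_ae_mem hP.ae_mem_unitInterval]
  exact hf.continuousOn.integrableOn_compact isCompact_Icc

lemma integral_eq (hP : IsTriadicCantor P) {f : ℝ → ℝ} (hf : Integrable f P) :
    ∫ x, f x ∂P = 3⁻¹ * ∑ j, ∫ x, f (S j x) ∂P := by
  have hmap : ∀ j, Integrable f (P.map (S j)) := fun j => by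
    refine (hf.smul_measure (c := 3) (by simp)).mono_measure ?_
    conv_rhs => rw [hP.eq_smul_sum]
    rw [smul_smul, ENNReal.mul_inv_cancel (by norm_num) (by simp), one_smul]
    exact Finset.single_le_sum (fun i _ => Measure.zero_le _) (Finset.mem_univ j)
  conv_lhs => rw [hP.eq_smul_sum]
  rw [integral_smul_measure, integral_finsetSum_measure fun j _ => hmap j]
  simp [integral_map (measurableEmbedding_S _).measurable.aemeasurable
    (hmap _).aestronglyMeasurable]

end IsTriadicCantor

section Moments

variable {μ : Measure ℝ} [IsProbabilityMeasure μ]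

lemma integral_affine (h₁ : Integrable (fun x => x) μ) (a b : ℝ) :
    ∫ x, (a * x + b) ∂μ = a * ∫ x, x ∂μ + b := by
  rw [integral_add (h₁.const_mul a) (integrable_const b), integral_const_mul]
  simp

lemma integral_sq_affine (h₁ : Integrable (fun x => x) μ) (h₂ : Integrable (fun x => x ^ 2) μ)
    (a b : ℝ) :
    ∫ x, (a * x + b) ^ 2 ∂μ = a ^ 2 * ∫ x, x ^ 2 ∂μ + 2 * a * b * ∫ x, x ∂μ + b ^ 2 := by
  have hexpand : (fun x => (a * x + b) ^ 2) = fun x => (a ^ 2 * x ^ 2 + 2 * a * b * x) + b ^ 2 := by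
    funext x; ring
  rw [hexpand, integral_add (f := fun x => a ^ 2 * x ^ 2 + 2 * a * b * x)
    ((h₂.const_mul _).add (h₁.const_mul _)) (integrable_const _)]
  rw [integral_add (h₂.const_mul _) (h₁.const_mul _), integral_const_mul, integral_const_mul]
  simp

end Moments

namespace IsTriadicCantor

variable {P : Measure ℝ} [IsProbabilityMeasure P]

lemma integral_id (hP : IsTriadicCantor P) : ∫ x, x ∂P = 1 / 2 := by
  have h := hP.integral_eq (f := fun x => x) (hP.integrable_of_continuous continuous_id)
  simp_rw [S_eq_affine, integral_affine (hP.integrable_of_continuous continuous_id),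
    Fin.sum_univ_three] at h
  norm_num at h
  linarith

lemma integral_sq (hP : IsTriadicCantor P) : ∫ x, x ^ 2 ∂P = 13 / 36 := by
  have h := hP.integral_eq (hP.integrable_of_continuous (continuous_pow 2))
  simp_rw [S_eq_affine, integral_sq_affine (hP.integrable_of_continuous continuous_id)
    (hP.integrable_of_continuous (continuous_pow 2)), Fin.sum_univ_three, hP.integral_id] at h
  norm_num at h
  linarith

lemma integral_sub_sq (hP : IsTriadicCantor P) (x₀ : ℝ) :
    ∫ x, (x - x₀) ^ 2 ∂P = 1 / 9 + (1 / 2 - x₀) ^ 2 := by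
  have h := integral_sq_affine (hP.integrable_of_continuous continuous_id)
    (hP.integrable_of_continuous (continuous_pow 2)) 1 (-x₀)
  simp only [one_mul, ← sub_eq_add_neg, hP.integral_id, hP.integral_sq] at h
  rw [h]; ring

lemma setIntegral_image_S (hP : IsTriadicCantor P) {A : Set ℝ} (hA : MeasurableSet A)
    (hA₁ : A ⊆ Set.Icc 0 1) (j : Fin 3) {g : ℝ → ℝ} (hg : Integrable g P) :
    ∫ x in S j '' A, g x ∂P = 3⁻¹ * ∫ x in A, g (S j x) ∂P := by
  have hSA : MeasurableSet (S j '' A) := (measurableEmbedding_S j).measurableSet_image.2 hA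
  rw [← integral_indicator hSA, hP.integral_eq (hg.indicator hSA), Finset.sum_eq_single j,
    ← integral_indicator hA]
  · simp only [Set.indicator_image (S_injective j)]
    rfl
  · intro i _ hij
    refine integral_eq_zero_of_ae ?_
    filter_upwards [hP.ae_mem_unitInterval] with x hx
    refine Set.indicator_of_notMem ?_ _
    rintro ⟨y, hy, hyx⟩
    exact hij (eq_of_S_eq hx (hA₁ hy) hyx.symm)
  · simp

end IsTriadicCantor

theorem stmt2 (P : Measure ℝ) [IsProbabilityMeasure P] (hP : IsTriadicCantor P)
    (k : ℕ) (σ : Fin k → Fin 3) (x₀ : ℝ) :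
    ∫ x in Jword σ, (x - x₀) ^ 2 ∂P
      = ((3 : ℝ) ^ k)⁻¹ * (((25 : ℝ) ^ k)⁻¹ * (1 / 9) + (Sword σ (1 / 2) - x₀) ^ 2) := by
  induction k generalizing x₀ with
  | zero =>
    have hJ : Jword σ = Set.Icc 0 1 := Set.image_id _
    rw [hJ, Measure.restrict_eq_self_of_ae_mem hP.ae_mem_unitInterval, hP.integral_sub_sq]
    simp [Sword]
  | succ k ih =>
    rw [Jword_succ, hP.setIntegral_image_S (measurableSet_Jword _)
      (Jword_subset_unitInterval _) _ (hP.integrable_of_continuous (by fun_prop))]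
    simp_rw [S_sub, div_pow]
    rw [integral_div, ih, Sword_succ, Function.comp_apply, S_sub]
    field_simp
    ring
end
end

section
/- Let β = log 3 / log 5 and define f : [1,2] → ℝ by f(x) = (1/28125)(5429 − 2304 x) x^{2/β}. Let x₀ = 5429 / (1152(β + 2)). Then: (i) 1 < x₀ < 2; (ii) f(x₀) > f(2) > f(1) and f(1) = 1/9; and (iii) the image f([1,2]) equals the closed interval [f(1), f(x₀)]. -/
open MeasureTheory Filter
open scoped ENNReal

noncomputable section

/-!
With `γ = 2/β` the profile is `x ↦ (A - B x) x^γ`, `A = 2V - V₂`, `B = V - V₂`, whose derivative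
`x^(γ-1) (Aγ - B(γ+1)x)` changes sign exactly once on `(0, ∞)`, at `x₀ = Aγ/(B(γ+1))`; for
`γ = 2/β` this is `5429/(1152(β + 2))`. Since `1/2 < β < 1` we get `1 < x₀ < 2` and `γ > 2`, so
`f(2) = V₂ 2^γ > 4 V₂ > V = f(1)`. The function rises on `[1, x₀]` and falls on `[x₀, 2]` to a
value above `f(1)`, so its image is `[f(1), f(x₀)]`.
-/

open Set

section Unimodal

variable {α δ : Type*} [ConditionallyCompleteLinearOrder α] [TopologicalSpace α] [OrderTopology α]
  [DenselyOrdered α] [LinearOrder δ] [TopologicalSpace δ] [OrderClosedTopology δ]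

theorem image_Icc_eq_Icc_of_monotoneOn_of_antitoneOn {f : α → δ} {p m q : α}
    (hpm : p ≤ m) (hmq : m ≤ q) (hf : ContinuousOn f (Icc p m))
    (hmono : MonotoneOn f (Icc p m)) (hanti : AntitoneOn f (Icc m q)) (hpq : f p ≤ f q) :
    f '' Icc p q = Icc (f p) (f m) := by
  refine (image_subset_iff.2 fun x hx => ?_).antisymm
    ((intermediate_value_Icc hpm hf).trans (image_mono (Icc_subset_Icc_right hmq)))
  rcases le_total x m with hxm | hmx
  · exact ⟨hmono ⟨le_rfl, hpm⟩ ⟨hx.1, hxm⟩ hx.1, hmono ⟨hx.1, hxm⟩ ⟨hpm, le_rfl⟩ hxm⟩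
  · exact ⟨hpq.trans (hanti ⟨hmx, hx.2⟩ ⟨hmq, le_rfl⟩ hx.2),
      hanti ⟨le_rfl, hmq⟩ ⟨hmx, hx.2⟩ hmx⟩

end Unimodal

section LinearTimesRpow

variable {a b γ : ℝ}

theorem hasDerivAt_sub_mul_rpow {x : ℝ} (hx : 0 < x) :
    HasDerivAt (fun y => (a - b * y) * y ^ γ) (x ^ (γ - 1) * (a * γ - b * (γ + 1) * x)) x := by
  refine (((hasDerivAt_id x).const_mul b).const_sub a |>.mul
    (Real.hasDerivAt_rpow_const (Or.inl hx.ne'))).congr_deriv ?_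
  rw [show x ^ γ = x ^ (γ - 1) * x by rw [← Real.rpow_add_one hx.ne', sub_add_cancel], id]
  ring

theorem continuous_sub_mul_rpow (hγ : 0 ≤ γ) : Continuous fun x : ℝ => (a - b * x) * x ^ γ :=
  (continuous_const.sub (continuous_const.mul continuous_id)).mul (Real.continuous_rpow_const hγ)

theorem strictMonoOn_sub_mul_rpow (hb : 0 < b) (hγ : 0 ≤ γ) :
    StrictMonoOn (fun x : ℝ => (a - b * x) * x ^ γ) (Icc 0 (a * γ / (b * (γ + 1)))) := by
  refine strictMonoOn_of_deriv_pos (convex_Icc _ _) (continuous_sub_mul_rpow hγ).continuousOn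
    fun x hx => ?_
  rw [interior_Icc] at hx
  rw [(hasDerivAt_sub_mul_rpow hx.1).deriv]
  have hcrit : b * (γ + 1) * x < a * γ := (lt_div_iff₀' (by positivity)).1 hx.2
  exact mul_pos (Real.rpow_pos_of_pos hx.1 _) (by linarith)

theorem strictAntiOn_sub_mul_rpow (ha : 0 ≤ a) (hb : 0 < b) (hγ : 0 ≤ γ) :
    StrictAntiOn (fun x : ℝ => (a - b * x) * x ^ γ) (Ici (a * γ / (b * (γ + 1)))) := by
  refine strictAntiOn_of_deriv_neg (convex_Ici _) (continuous_sub_mul_rpow hγ).continuousOn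
    fun x hx => ?_
  rw [interior_Ici] at hx
  have hx0 : 0 < x := lt_of_le_of_lt (by positivity) hx
  rw [(hasDerivAt_sub_mul_rpow hx0).deriv]
  have hcrit : a * γ < b * (γ + 1) * x := (div_lt_iff₀' (by positivity)).1 hx
  exact mul_neg_of_pos_of_neg (Real.rpow_pos_of_pos hx0 _) (by linarith)

end LinearTimesRpow

theorem one_half_lt_log_three_div_log_five : 1 / 2 < Real.log 3 / Real.log 5 := by
  rw [div_lt_div_iff₀ two_pos (Real.log_pos (by norm_num)), one_mul, mul_comm,
    ← Real.log_rpow three_pos]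
  exact Real.log_lt_log (by norm_num) (by norm_num)

theorem log_three_div_log_five_lt_one : Real.log 3 / Real.log 5 < 1 :=
  (div_lt_one (Real.log_pos (by norm_num))).2 (Real.log_lt_log (by norm_num) (by norm_num))

theorem stmt16 :
    (1 < 5429 / (1152 * (Real.log 3 / Real.log 5 + 2)) ∧
      5429 / (1152 * (Real.log 3 / Real.log 5 + 2)) < 2) ∧
    ((fun x : ℝ => (1 / 28125) * (5429 - 2304 * x) * x ^ (2 / (Real.log 3 / Real.log 5)))
        (5429 / (1152 * (Real.log 3 / Real.log 5 + 2))) >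
      (fun x : ℝ => (1 / 28125) * (5429 - 2304 * x) * x ^ (2 / (Real.log 3 / Real.log 5))) 2 ∧
      (fun x : ℝ => (1 / 28125) * (5429 - 2304 * x) * x ^ (2 / (Real.log 3 / Real.log 5))) 2 >
      (fun x : ℝ => (1 / 28125) * (5429 - 2304 * x) * x ^ (2 / (Real.log 3 / Real.log 5))) 1 ∧
      (fun x : ℝ => (1 / 28125) * (5429 - 2304 * x) * x ^ (2 / (Real.log 3 / Real.log 5))) 1
        = 1 / 9) ∧
    (fun x : ℝ => (1 / 28125) * (5429 - 2304 * x) * x ^ (2 / (Real.log 3 / Real.log 5))) ''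
        Set.Icc 1 2
      = Set.Icc
          ((fun x : ℝ => (1 / 28125) * (5429 - 2304 * x) *
              x ^ (2 / (Real.log 3 / Real.log 5))) 1)
          ((fun x : ℝ => (1 / 28125) * (5429 - 2304 * x) *
              x ^ (2 / (Real.log 3 / Real.log 5)))
            (5429 / (1152 * (Real.log 3 / Real.log 5 + 2)))) := by
  have hβ₁ := one_half_lt_log_three_div_log_five
  have hβ₂ := log_three_div_log_five_lt_one
  generalize Real.log 3 / Real.log 5 = β at hβ₁ hβ₂ ⊢
  have hβ : 0 < β := by linarith
  have hγ : 2 < 2 / β := by rw [lt_div_iff₀ hβ]; linarith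
  have hx₀₁ : 1 < 5429 / (1152 * (β + 2)) := by rw [lt_div_iff₀ (by positivity)]; linarith
  have hx₀₂ : 5429 / (1152 * (β + 2)) < 2 := by rw [div_lt_iff₀ (by positivity)]; linarith
  have hx₀ : 5429 / (1152 * (β + 2)) = 5429 / 28125 * (2 / β) / (2304 / 28125 * (2 / β + 1)) := by
    field_simp; ring
  have hf : (fun x : ℝ => 1 / 28125 * (5429 - 2304 * x) * x ^ (2 / β)) =
      fun x => (5429 / 28125 - 2304 / 28125 * x) * x ^ (2 / β) := by
    funext x; ring
  rw [hf, hx₀]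
  rw [hx₀] at hx₀₁ hx₀₂
  set f := fun x : ℝ => (5429 / 28125 - 2304 / 28125 * x) * x ^ (2 / β)
  set x₀ := 5429 / 28125 * (2 / β) / (2304 / 28125 * (2 / β + 1))
  have hmono : StrictMonoOn f (Icc 1 x₀) :=
    (strictMonoOn_sub_mul_rpow (by norm_num) (by positivity)).mono (Icc_subset_Icc_left zero_le_one)
  have hanti : StrictAntiOn f (Icc x₀ 2) :=
    (strictAntiOn_sub_mul_rpow (by norm_num) (by norm_num) (by positivity)).mono Icc_subset_Ici_self
  have hf₁ : f 1 = 1 / 9 := by norm_num [f]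
  have hf₂ : f 2 = 821 / 28125 * 2 ^ (2 / β) := by simp only [f]; ring
  have hpow : (4 : ℝ) < 2 ^ (2 / β) := by
    convert Real.rpow_lt_rpow_of_exponent_lt one_lt_two hγ; norm_num
  have hf₁₂ : f 1 < f 2 := by rw [hf₁, hf₂]; linarith
  refine ⟨⟨hx₀₁, hx₀₂⟩, ⟨hanti ⟨le_rfl, hx₀₂.le⟩ ⟨hx₀₂.le, le_rfl⟩ hx₀₂, hf₁₂, hf₁⟩, ?_⟩
  exact image_Icc_eq_Icc_of_monotoneOn_of_antitoneOn hx₀₁.le hx₀₂.le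
    ((continuous_sub_mul_rpow (by positivity)).continuousOn) hmono.monotoneOn hanti.antitoneOn
    hf₁₂.le
end
end
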